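/- arXiv:2103.00065 — 3 statements merged into one kernel-verified Lean document; each statement's English description precedes it below -/
import Mathlib

section
/- Consider gradient descent with Polyak (heavy-ball) momentum with step size η > 0 and momentum parameter β ∈ [0,1) on the quadratic objective f(x) = (1/2)xᵀAx + bᵀx + c on ℝᵈ with A symmetric: the iterates satisfy v_{t+1} = βv_t − η(Ax_t + b) and x_{t+1} = x_t + v_{t+1}. Let q be a unit eigenvector of A with eigenvalue a. If a > (1/η)(2 + 2β), then there exist initial values x₀, v₀ ∈ ℝᵈ for which the sequence {⟨q, x_t⟩} is unbounded. -/
open Matrix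

/-- For Polyak (heavy-ball) momentum with step size `η > 0` and momentum `β ∈ [0,1)` on the
quadratic `f(x) = ½xᵀAx + bᵀx + c` (`A` symmetric), if `q` is a unit eigenvector of `A` with
eigenvalue `a > (1/η)(2 + 2β)`, then there exist initial values `x₀, v₀` for which the
sequence `⟨q, x_t⟩` is unbounded. -/
theorem polyak_diverges_above_mss
    {d : ℕ} (A : Matrix (Fin d) (Fin d) ℝ) (hA : A.IsSymm)
    (b : Fin d → ℝ) (c : ℝ) (η β : ℝ) (hη : 0 < η) (hβ0 : 0 ≤ β) (hβ1 : β < 1)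
    (q : Fin d → ℝ) (a : ℝ) (hq : A.mulVec q = a • q) (hqnorm : q ⬝ᵥ q = 1)
    (ha : (1 / η) * (2 + 2 * β) < a) :
    ∃ x v : ℕ → (Fin d → ℝ),
      (∀ t, v (t + 1) = β • v t - η • (A.mulVec (x t) + b)) ∧
      (∀ t, x (t + 1) = x t + v (t + 1)) ∧
      ¬ ∃ M : ℝ, ∀ t, |q ⬝ᵥ x t| ≤ M := by
  classical
  have ha0 : 0 < a := lt_trans (by positivity) ha
  have hηa : 2 + 2 * β < η * a := by
    have h1 : η * ((1/η) * (2 + 2*β)) = 2 + 2*β := by field_simp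
    nlinarith [mul_lt_mul_of_pos_left ha hη]
  set k : ℝ := q ⬝ᵥ b with hk
  set r : ℝ := 1 + β - η * a with hr
  have hr2 : r < -(1 + β) := by simp only [hr]; linarith
  have hdisc : (0:ℝ) ≤ r^2 - 4*β := by nlinarith [sq_nonneg (1 - β), sq_nonneg (1 + β)]
  set s : ℝ := Real.sqrt (r^2 - 4*β) with hs
  have hs0 : 0 ≤ s := Real.sqrt_nonneg _
  have hs2 : s^2 = r^2 - 4*β := Real.sq_sqrt hdisc
  set L : ℝ := (r - s)/2 with hL
  have hL2 : L^2 = r*L - β := by simp only [hL]; linear_combination (1/4 : ℝ) * hs2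
  have hLlt : L < -1 := by
    rcases le_or_gt s (r + 2) with h | h
    · nlinarith
    · simp only [hL]; linarith
  have hL0 : L ≠ 0 := by intro h; rw [h] at hLlt; linarith
  have hL2' : L^2 = (1 + β - η * a) * L - β := by rw [← hr]; exact hL2
  clear_value L s r k
  -- the dynamics
  set step : (Fin d → ℝ) × (Fin d → ℝ) → (Fin d → ℝ) × (Fin d → ℝ) :=
    fun p => ⟨p.1 + (β • p.2 - η • (A.mulVec p.1 + b)), β • p.2 - η • (A.mulVec p.1 + b)⟩
    with hstep
  set x0 : Fin d → ℝ := (-k/a + 1) • q with hx0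
  set v0 : Fin d → ℝ := ((L-1)/L) • q with hv0
  set seq : ℕ → (Fin d → ℝ) × (Fin d → ℝ) := fun t => step^[t] (x0, v0) with hseqdef
  have hseq : ∀ t, seq (t+1) = step (seq t) := by
    intro t
    simp only [hseqdef]
    exact Function.iterate_succ_apply' step t _
  -- projection lemma
  have hdot : ∀ y : Fin d → ℝ, q ⬝ᵥ A.mulVec y = a * (q ⬝ᵥ y) := by
    intro y
    rw [dotProduct_mulVec, ← mulVec_transpose, hA, hq, smul_dotProduct, smul_eq_mul]
  -- key invariant
  have key : ∀ t, q ⬝ᵥ (seq t).1 = -k/a + L^t ∧ q ⬝ᵥ (seq t).2 = L^t * ((L-1)/L) := by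
    intro t
    induction t with
    | zero =>
      constructor
      · simp [hseqdef, hx0, smul_dotProduct, hqnorm]
      · simp [hseqdef, hv0, smul_dotProduct, hqnorm]
    | succ t ih =>
      obtain ⟨ihx, ihv⟩ := ih
      have hvstep : q ⬝ᵥ (seq (t+1)).2 = β * (q ⬝ᵥ (seq t).2) - η * (a * (q ⬝ᵥ (seq t).1) + k) := by
        rw [hseq]
        show q ⬝ᵥ (β • (seq t).2 - η • (A.mulVec (seq t).1 + b)) = _
        rw [dotProduct_sub, dotProduct_smul, dotProduct_smul, dotProduct_add, hdot]
        simp only [smul_eq_mul, ← hk]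
      have hv' : q ⬝ᵥ (seq (t+1)).2 = L^(t+1) * ((L-1)/L) := by
        rw [hvstep, ihx, ihv]
        field_simp
        linear_combination (-(L^t)) * hL2'
      refine ⟨?_, hv'⟩
      have hxstep : q ⬝ᵥ (seq (t+1)).1 = q ⬝ᵥ (seq t).1 + q ⬝ᵥ (seq (t+1)).2 := by
        rw [hseq]
        exact dotProduct_add _ _ _
      rw [hxstep, ihx, hv']
      field_simp
      ring
  -- assemble
  refine ⟨fun t => (seq t).1, fun t => (seq t).2, ?_, ?_, ?_⟩
  · intro t
    show (seq (t+1)).2 = β • (seq t).2 - η • (A.mulVec (seq t).1 + b)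
    rw [hseq]
  · intro t
    show (seq (t+1)).1 = (seq t).1 + (seq (t+1)).2
    rw [hseq]
  · rintro ⟨M, hM⟩
    have hL1 : 1 < |L| := by
      rw [abs_of_neg (by linarith : L < 0)]; linarith
    obtain ⟨t, ht⟩ := pow_unbounded_of_one_lt (M + |k/a|) hL1
    have h1 : |L|^t - |k/a| ≤ |L^t - k/a| := by
      calc |L|^t - |k/a| = |L^t| - |k/a| := by rw [abs_pow]
        _ ≤ |L^t - k/a| := abs_sub_abs_le_abs_sub _ _
    have h2 : q ⬝ᵥ (seq t).1 = -k/a + L^t := (key t).1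
    have h3 := hM t
    rw [h2] at h3
    have : |L^t - k/a| ≤ M := by
      convert h3 using 2; ring
    linarith
end

section
/- Consider gradient descent with Nesterov momentum with step size η > 0 and momentum parameter β ∈ [0,1) on the quadratic objective f(x) = (1/2)xᵀAx + bᵀx + c on ℝᵈ with A symmetric: the iterates satisfy v_{t+1} = βv_t − η(A(x_t + βv_t) + b) and x_{t+1} = x_t + v_{t+1}. Let q be a unit eigenvector of A with eigenvalue a. If a > (1/η)·(2 + 2β)/(1 + 2β), then there exist initial values x₀, v₀ ∈ ℝᵈ for which the sequence {⟨q, x_t⟩} is unbounded. -/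
open Matrix

/-- For Nesterov momentum with step size `η > 0` and momentum `β ∈ [0,1)` on the quadratic
`f(x) = ½xᵀAx + bᵀx + c` (`A` symmetric), if `q` is a unit eigenvector of `A` with
eigenvalue `a > (1/η)(2 + 2β)/(1 + 2β)`, then there exist initial values `x₀, v₀` for which
the sequence `⟨q, x_t⟩` is unbounded. -/
theorem nesterov_diverges_above_mss
    {d : ℕ} (A : Matrix (Fin d) (Fin d) ℝ) (hA : A.IsSymm)
    (b : Fin d → ℝ) (c : ℝ) (η β : ℝ) (hη : 0 < η) (hβ0 : 0 ≤ β) (hβ1 : β < 1)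
    (q : Fin d → ℝ) (a : ℝ) (hq : A.mulVec q = a • q) (hqnorm : q ⬝ᵥ q = 1)
    (ha : (1 / η) * ((2 + 2 * β) / (1 + 2 * β)) < a) :
    ∃ x v : ℕ → (Fin d → ℝ),
      (∀ t, v (t + 1) = β • v t - η • (A.mulVec (x t + β • v t) + b)) ∧
      (∀ t, x (t + 1) = x t + v (t + 1)) ∧
      ¬ ∃ M : ℝ, ∀ t, |q ⬝ᵥ x t| ≤ M := by
  -- basic inequalities
  have h2β : (0:ℝ) < 1 + 2 * β := by linarith
  have ha' : 2 + 2 * β < a * (η * (1 + 2 * β)) := by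
    rw [div_mul_eq_mul_div, one_mul, div_div, div_lt_iff₀ (by positivity)] at ha
    linarith
  have hηa1 : 1 < η * a := by nlinarith
  have hηa0 : η * a ≠ 0 := by positivity
  have ha0 : a ≠ 0 := by nlinarith
  -- a root s < -1 of the characteristic polynomial
  obtain ⟨s, hchar, hs_lt⟩ :
      ∃ s : ℝ, s ^ 2 - ((1 + β) * (1 - η * a)) * s + β * (1 - η * a) = 0 ∧ s < -1 := by
    have hp : 1 + ((1 + β) * (1 - η * a)) + β * (1 - η * a) < 0 := by nlinarith
    have hΔ : 0 ≤ ((1 + β) * (1 - η * a)) ^ 2 - 4 * (β * (1 - η * a)) := by nlinarith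
    set r : ℝ := Real.sqrt (((1 + β) * (1 - η * a)) ^ 2 - 4 * (β * (1 - η * a))) with hrdef
    have hr0 : 0 ≤ r := Real.sqrt_nonneg _
    have hr2 : r ^ 2 = ((1 + β) * (1 - η * a)) ^ 2 - 4 * (β * (1 - η * a)) :=
      Real.sq_sqrt hΔ
    refine ⟨((1 + β) * (1 - η * a) - r) / 2, by nlinarith [hr2], ?_⟩
    have hrgt : (1 + β) * (1 - η * a) + 2 < r := by
      nlinarith [hr2, hr0, hp, sq_nonneg (r - ((1 + β) * (1 - η * a) + 2))]
    linarith
  set be : ℝ := q ⬝ᵥ b with hbe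
  set ye : ℝ := (β * (1 - η * a) - s) / (η * a) with hyedef
  have hYe : η * a * ye = β * (1 - η * a) - s := by
    rw [hyedef]; field_simp
  have hye0 : ye ≠ 0 := by
    intro h
    rw [h, mul_zero] at hYe
    have hs_eq : s = β * (1 - η * a) := by linarith
    have h3 : s * (η * a) = 0 := by linear_combination hchar - (s - 1) * hs_eq
    have := mul_eq_zero.mp h3
    rcases this with h | h
    · linarith
    · exact hηa0 h
  have hY2 : s * ye = ye + s := by
    have h2 : η * a * (s * ye) = η * a * (ye + s) := by
      linear_combination (s - 1) * hYe - hchar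
    exact mul_left_cancel₀ hηa0 h2
  -- scalar sequences
  set y : ℕ → ℝ := fun t => -(be / a) + s ^ t * ye with hy
  set w : ℕ → ℝ := fun t => s ^ t with hw
  have rec1 : ∀ t, w (t + 1) = β * w t - η * (a * (y t + β * w t) + be) := by
    intro t
    simp only [hy, hw]
    have h2 : a * (s ^ (t + 1)) =
        a * (β * s ^ t - η * (a * (-(be / a) + s ^ t * ye + β * s ^ t) + be)) := by
      have hba : a * (be / a) = be := by field_simp
      linear_combination (a * s ^ t) * hYe - η * a * hba
    exact mul_left_cancel₀ ha0 h2
  have rec2 : ∀ t, y (t + 1) = y t + w (t + 1) := by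
    intro t
    simp only [hy, hw]
    linear_combination (s ^ t) * hY2
  -- projection lemma
  have hAq : ∀ z : Fin d → ℝ, q ⬝ᵥ A.mulVec z = a * (q ⬝ᵥ z) := by
    intro z
    rw [dotProduct_mulVec, ← Matrix.mulVec_transpose, hA.eq, hq, smul_dotProduct]
    simp [smul_eq_mul]
  -- vector sequences
  set step : (Fin d → ℝ) × (Fin d → ℝ) → (Fin d → ℝ) × (Fin d → ℝ) :=
    fun p => (p.1 + (β • p.2 - η • (A.mulVec (p.1 + β • p.2) + b)),
              β • p.2 - η • (A.mulVec (p.1 + β • p.2) + b)) with hstep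
  set Z : ℕ → (Fin d → ℝ) × (Fin d → ℝ) := fun t => step^[t] (y 0 • q, w 0 • q) with hZ
  have hZsucc : ∀ t, Z (t + 1) = step (Z t) := by
    intro t
    simp only [hZ, Function.iterate_succ_apply']
  refine ⟨fun t => (Z t).1, fun t => (Z t).2, ?_, ?_, ?_⟩
  · intro t
    show (Z (t + 1)).2 = β • (Z t).2 - η • (A.mulVec ((Z t).1 + β • (Z t).2) + b)
    rw [hZsucc t]
  · intro t
    show (Z (t + 1)).1 = (Z t).1 + (Z (t + 1)).2
    rw [hZsucc t]
  · -- projections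
    have proj : ∀ t, q ⬝ᵥ (Z t).1 = y t ∧ q ⬝ᵥ (Z t).2 = w t := by
      intro t
      induction t with
      | zero =>
          constructor <;> · simp [hZ, dotProduct_smul, hqnorm, smul_eq_mul]
      | succ n ih =>
          obtain ⟨ih1, ih2⟩ := ih
          have hv : q ⬝ᵥ (Z (n + 1)).2 = w (n + 1) := by
            rw [hZsucc n]
            show q ⬝ᵥ (β • (Z n).2 - η • (A.mulVec ((Z n).1 + β • (Z n).2) + b)) = _
            rw [dotProduct_sub, dotProduct_smul, dotProduct_smul, dotProduct_add, hAq,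
              dotProduct_add, dotProduct_smul, ih1, ih2, rec1 n]
            simp [smul_eq_mul, hbe]
          refine ⟨?_, hv⟩
          rw [hZsucc n]
          show q ⬝ᵥ ((Z n).1 + (β • (Z n).2 - η • (A.mulVec ((Z n).1 + β • (Z n).2) + b))) = _
          rw [dotProduct_add, ih1, rec2 n, ← hv, hZsucc n]
    rintro ⟨M, hM⟩
    have habs : 1 < |s| := by rw [abs_of_neg (by linarith : s < 0)]; linarith
    obtain ⟨t, ht⟩ := pow_unbounded_of_one_lt ((M + |be / a|) / |ye|) habs
    have hMt := hM t
    rw [(proj t).1] at hMt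
    simp only [hy] at hMt
    have h1 : |s ^ t * ye| ≤ M + |be / a| := by
      have h2 : s ^ t * ye = (-(be / a) + s ^ t * ye) - (-(be / a)) := by ring
      rw [h2]
      refine le_trans (abs_sub _ _) ?_
      rw [abs_neg]
      linarith
    have hye_pos : 0 < |ye| := abs_pos.mpr hye0
    rw [div_lt_iff₀ hye_pos] at ht
    rw [abs_mul, abs_pow] at h1
    linarith
end

section
/- Let η > 0, a > 0, and 0 ≤ β < 1 be real numbers with ηa·(1 + 2β) > 2 + 2β. Then the characteristic polynomial z² − (1 + β)(1 − ηa)z + β(1 − ηa) of the Nesterov momentum recurrence x̃_{t+1} = (1 + β)(1 − ηa)x̃_t − β(1 − ηa)x̃_{t−1} has a real root r with r < −1. -/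
/-- If `ηa(1 + 2β) > 2 + 2β` with `η > 0`, `a > 0`, `0 ≤ β < 1`, then the characteristic
polynomial `z² - (1+β)(1-ηa)z + β(1-ηa)` of the Nesterov momentum recurrence has a real
root `r < -1`. -/
theorem nesterov_characteristic_root
    (η a β : ℝ) (hη : 0 < η) (ha : 0 < a) (hβ0 : 0 ≤ β) (hβ1 : β < 1)
    (h : 2 + 2 * β < η * a * (1 + 2 * β)) :
    ∃ r : ℝ, r ^ 2 - (1 + β) * (1 - η * a) * r + β * (1 - η * a) = 0 ∧ r < -1 := by
  set b : ℝ := (1 + β) * (1 - η * a) with hb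
  set c : ℝ := β * (1 - η * a) with hc
  set f : ℝ → ℝ := fun x => x ^ 2 - b * x + c with hf
  have hcont : Continuous f := by fun_prop
  set t : ℝ := -(2 + |b| + |c|) with ht
  have ht1 : t ≤ -1 := by
    have := abs_nonneg b; have := abs_nonneg c
    simp only [ht]; linarith
  have hfneg : f (-1) < 0 := by
    simp only [hf, hb, hc]
    nlinarith
  have hfpos : 0 ≤ f t := by
    have h1 : -|b| ≤ b := neg_abs_le b
    have h2 : b ≤ |b| := le_abs_self b
    have h3 : -|c| ≤ c := neg_abs_le c
    have h4 : c ≤ |c| := le_abs_self c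
    have hb0 := abs_nonneg b; have hc0 := abs_nonneg c
    simp only [hf, ht]
    nlinarith
  have key := intermediate_value_Icc' ht1 hcont.continuousOn
  have h0 : (0:ℝ) ∈ Set.Icc (f (-1)) (f t) := ⟨le_of_lt hfneg, hfpos⟩
  obtain ⟨r, hr, hfr⟩ := key h0
  refine ⟨r, hfr, ?_⟩
  rcases lt_or_eq_of_le hr.2 with h' | h'
  · exact h'
  · exfalso; rw [h'] at hfr; rw [hfr] at hfneg; exact lt_irrefl 0 hfneg
end
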